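/- Assume hypotheses (EC) and (UC). Let τ ∈ [0,T). Then M(τ,r) < M^τ for every r > 0; r = r(M(τ,r),τ) for every r ∈ (0,r_T]; and M = M(τ,r(M,τ)) for every M ∈ [0,M^τ). Consequently the map r ↦ M(τ,r) on (0,r_T] is the inverse of the map M ↦ r(M,τ) on [0,M^τ). -/

import Mathlib

open MeasureTheory Set Filter Topology

noncomputable section

variable {H : Type*} [NormedAddCommGroup H] [InnerProductSpace ℂ H] [CompleteSpace H]
  [SecondCountableTopology H]

/-- `U` is a strongly continuous one-parameter group of unitary operators on `H`,
abstracting the Schrödinger group `e^{-iΔt}`. -/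
def IsUnitaryGroup (U : ℝ → H →L[ℂ] H) : Prop :=
  U 0 = ContinuousLinearMap.id ℂ H ∧
  (∀ s t : ℝ, U (s + t) = (U s).comp (U t)) ∧
  (∀ (t : ℝ) (x : H), ‖U t x‖ = ‖x‖) ∧
  ∀ x : H, Continuous fun t : ℝ => U t x

/-- `B` is a nonzero orthogonal projection on `H`, abstracting multiplication by `χ_ω`. -/
def IsOrthProj (B : H →L[ℂ] H) : Prop :=
  B ≠ 0 ∧ B.comp B = B ∧ ∀ x y : H, (inner ℂ (B x) y : ℂ) = inner ℂ x (B y)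

/-- Membership in `L∞((a,b);H)`. -/
def MemLinfty (u : ℝ → H) (a b : ℝ) : Prop :=
  AEStronglyMeasurable u (volume : Measure ℝ) ∧
    ∃ c : ℝ, ∀ᵐ t : ℝ ∂volume, t ∈ Ioo a b → ‖u t‖ ≤ c

/-- Membership in `L∞((0,∞);H)`. -/
def MemLinftyInf (u : ℝ → H) : Prop :=
  AEStronglyMeasurable u (volume : Measure ℝ) ∧
    ∃ c : ℝ, ∀ᵐ t : ℝ ∂volume, t ∈ Ioi (0 : ℝ) → ‖u t‖ ≤ c

/-- The `L∞((a,b);H)` norm of `u`. -/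
def supNorm (u : ℝ → H) (a b : ℝ) : ℝ :=
  sInf {c : ℝ | 0 ≤ c ∧ ∀ᵐ t : ℝ ∂volume, t ∈ Ioo a b → ‖u t‖ ≤ c}

/-- `stateT U B T τ u y₀ = y(T; χ_{(τ,T)}u, y₀)`, the mild solution at time `T` of the
controlled Schrödinger equation with initial state `y₀`, the control acting on `(τ,T)`:
`y(T) = U(T)y₀ + ∫_τ^T U(T-s) B u(s) ds`.  The free state at time `t` starting from `y₀`
with control `u` active from time `0` is `stateT U B t 0 u y₀`. -/
def stateT (U : ℝ → H →L[ℂ] H) (B : H →L[ℂ] H) (T τ : ℝ) (u : ℝ → H) (y₀ : H) : H :=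
  U T y₀ + ∫ s in Ioo τ T, U (T - s) (B (u s))

/-- Hypothesis (EC): `L∞`-exact controllability with cost. -/
def EC (U : ℝ → H →L[ℂ] H) (B : H →L[ℂ] H) : Prop :=
  ∀ τ : ℝ, 0 < τ → ∃ C : ℝ, 0 < C ∧ ∀ y₀ z : H, ∃ u : ℝ → H,
    AEStronglyMeasurable u (volume : Measure ℝ) ∧
    (∀ᵐ t : ℝ ∂volume, t ∈ Ioo 0 τ → ‖u t‖ ≤ C * ‖z - U τ y₀‖) ∧
    stateT U B τ 0 u y₀ = z

/-- Hypothesis (UC): unique continuation. -/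
def UC (U : ℝ → H →L[ℂ] H) (B : H →L[ℂ] H) : Prop :=
  ∀ η : H, η ≠ 0 → volume {t : ℝ | B (U t η) = 0} = 0

/-- The admissible set `U_M` of the minimal time problem `(TOCP)_M`. -/
def UMset (U : ℝ → H →L[ℂ] H) (B : H →L[ℂ] H) (y₀ : H) (M : ℝ) : Set (ℝ → H) :=
  {u | MemLinftyInf u ∧ (∀ᵐ t : ℝ ∂volume, t ∈ Ioi (0 : ℝ) → ‖u t‖ ≤ M) ∧
    ∃ s : ℝ, 0 < s ∧ stateT U B s 0 u y₀ = 0}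

/-- The minimal time `T_M` of `(TOCP)_M`. -/
def Tmin (U : ℝ → H →L[ℂ] H) (B : H →L[ℂ] H) (y₀ : H) (M : ℝ) : ℝ :=
  sInf {s : ℝ | 0 < s ∧ ∃ u ∈ UMset U B y₀ M, stateT U B s 0 u y₀ = 0}

/-- The admissible set `V_T` of the minimal norm problem `(NOCP)_T`. -/
def VTset (U : ℝ → H →L[ℂ] H) (B : H →L[ℂ] H) (y₀ : H) (T : ℝ) : Set (ℝ → H) :=
  {v | MemLinfty v 0 T ∧ stateT U B T 0 v y₀ = 0}

/-- The minimal norm `M_T` of `(NOCP)_T`. -/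
def Mmin (U : ℝ → H →L[ℂ] H) (B : H →L[ℂ] H) (y₀ : H) (T : ℝ) : ℝ :=
  sInf ((fun v : ℝ → H => supNorm v 0 T) '' VTset U B y₀ T)

/-- Hypothesis (BB): bang-bang property of the minimal time problems. -/
def BB (U : ℝ → H →L[ℂ] H) (B : H →L[ℂ] H) : Prop :=
  ∀ y₀ : H, y₀ ≠ 0 → ∀ M : ℝ, 0 < M → ∀ u ∈ UMset U B y₀ M,
    stateT U B (Tmin U B y₀ M) 0 u y₀ = 0 →
    ∀ᵐ t : ℝ ∂volume, t ∈ Ioo 0 (Tmin U B y₀ M) → ‖u t‖ = M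

/-- Hypothesis (ET): existence of optimal controls for the minimal time problems. -/
def ET (U : ℝ → H →L[ℂ] H) (B : H →L[ℂ] H) : Prop :=
  ∀ y₀ : H, y₀ ≠ 0 → ∀ M : ℝ, 0 < M →
    ∃ u ∈ UMset U B y₀ M, stateT U B (Tmin U B y₀ M) 0 u y₀ = 0

/-- The admissible set `U_{M,τ}`. -/
def UadmSet (M τ T : ℝ) : Set (ℝ → H) :=
  {u | MemLinfty u 0 T ∧ ∀ᵐ t : ℝ ∂volume, t ∈ Ioo τ T → ‖u t‖ ≤ M}

/-- The optimal distance `r(M,τ)` of the optimal target problem `(OP)^{M,τ}`. -/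
def rOP (U : ℝ → H →L[ℂ] H) (B : H →L[ℂ] H) (y₀ z_d : H) (T M τ : ℝ) : ℝ :=
  sInf ((fun u : ℝ → H => ‖stateT U B T τ u y₀ - z_d‖) '' UadmSet M τ T)

/-- `u` is an optimal control to `(OP)^{M,τ}`. -/
def IsOptOP (U : ℝ → H →L[ℂ] H) (B : H →L[ℂ] H) (y₀ z_d : H) (T M τ : ℝ) (u : ℝ → H) :
    Prop :=
  u ∈ UadmSet M τ T ∧ ‖stateT U B T τ u y₀ - z_d‖ = rOP U B y₀ z_d T M τ

/-- `M^τ`, the minimal norm for exact steering to the target `z_d`. -/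
def Mtau (U : ℝ → H →L[ℂ] H) (B : H →L[ℂ] H) (y₀ z_d : H) (T τ : ℝ) : ℝ :=
  sInf ((fun u : ℝ → H => supNorm u τ T) ''
    {u : ℝ → H | MemLinfty u 0 T ∧ stateT U B T τ u y₀ = z_d})

/-- The admissible set `W_{τ,r}` of the optimal norm problem `(NP)^{τ,r}`. -/
def WadmSet (U : ℝ → H →L[ℂ] H) (B : H →L[ℂ] H) (y₀ z_d : H) (T τ r : ℝ) :
    Set (ℝ → H) :=
  {u | MemLinfty u 0 T ∧ ‖stateT U B T τ u y₀ - z_d‖ ≤ r}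

/-- The optimal norm `M(τ,r)` of `(NP)^{τ,r}`. -/
def MNP (U : ℝ → H →L[ℂ] H) (B : H →L[ℂ] H) (y₀ z_d : H) (T τ r : ℝ) : ℝ :=
  sInf ((fun u : ℝ → H => supNorm u τ T) '' WadmSet U B y₀ z_d T τ r)

/-- `u` is an optimal control to `(NP)^{τ,r}`. -/
def IsOptNP (U : ℝ → H →L[ℂ] H) (B : H →L[ℂ] H) (y₀ z_d : H) (T τ r : ℝ) (u : ℝ → H) :
    Prop :=
  u ∈ WadmSet U B y₀ z_d T τ r ∧ supNorm u τ T = MNP U B y₀ z_d T τ r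

/-- The admissible set `V_{M,r}` of the second type optimal time problem `(TP)^{M,r}`. -/
def VadmSet (U : ℝ → H →L[ℂ] H) (B : H →L[ℂ] H) (y₀ z_d : H) (T M r : ℝ) :
    Set (ℝ → H) :=
  {u | ∃ τ : ℝ, τ ∈ Ico (0 : ℝ) T ∧ u ∈ UadmSet M τ T ∧
    ‖stateT U B T τ u y₀ - z_d‖ ≤ r}

/-- `τ_{M,r}(u)`. -/
def tauOf (U : ℝ → H →L[ℂ] H) (B : H →L[ℂ] H) (y₀ z_d : H) (T r : ℝ) (u : ℝ → H) : ℝ :=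
  sSup {τ : ℝ | τ ∈ Ico (0 : ℝ) T ∧ ‖stateT U B T τ u y₀ - z_d‖ ≤ r}

/-- The optimal time `τ(M,r)` of `(TP)^{M,r}`. -/
def tauTP (U : ℝ → H →L[ℂ] H) (B : H →L[ℂ] H) (y₀ z_d : H) (T M r : ℝ) : ℝ :=
  sSup (tauOf U B y₀ z_d T r '' VadmSet U B y₀ z_d T M r)

/-- `u` is an optimal control to `(TP)^{M,r}`. -/
def IsOptTP (U : ℝ → H →L[ℂ] H) (B : H →L[ℂ] H) (y₀ z_d : H) (T M r : ℝ) (u : ℝ → H) :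
    Prop :=
  u ∈ VadmSet U B y₀ z_d T M r ∧
    ‖stateT U B T (tauTP U B y₀ z_d T M r) u y₀ - z_d‖ ≤ r

/-- The adjoint state `φ*(t) = U(t-T)(z_d - y(T; χ_{(τ,T)}u, y₀))`. -/
def adjState (U : ℝ → H →L[ℂ] H) (B : H →L[ℂ] H) (y₀ z_d : H) (T τ : ℝ) (u : ℝ → H)
    (t : ℝ) : H :=
  U (t - T) (z_d - stateT U B T τ u y₀)

/-!
The controls in `L∞(0,T)` form a real vector space `X` with the seminorm `p = ‖·‖_{L∞(τ,T)}`;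
the control-to-state map `J u = ∫_τ^T U(T-s) B u(s) ds` is linear with `‖J u‖ ≤ ‖B‖ (T-τ) p u`,
and (EC) on `(0, T-τ)`, shifted to `(τ,T)`, says that `J` is onto with cost: every `z` is `J v`
for some `v` with `p v ≤ C ‖z‖`. With `a = z_d - U(T) y₀`, the numbers `r(M,τ)`, `M(τ,r)` and
`M^τ` are the values `minDist M`, `minNorm r` and `minNorm 0` of the convex programs
`inf {‖J x - a‖ : p x ≤ M}` and `inf {p x : ‖J x - a‖ ≤ r}`.

Both value functions are convex. `minNorm` vanishes at `‖a‖` and, by the bound on `J`, is positive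
before it, so it is strictly decreasing on `[0, ‖a‖]`: this gives `M(τ,r) < M^τ` and
`r(M(τ,r),τ) ≥ r`, while the continuity of the convex `minDist` gives `r(M(τ,r),τ) ≤ r`.
Steering `J x` towards `a` by a distance `t` costs `C t`, so `minDist` strictly decreases while it
is positive; together with `r(M(τ, r(M,τ)), τ) = r(M,τ)` this forces `M(τ, r(M,τ)) = M`.
-/

section ValueFunction

variable {X : Type*} [AddCommGroup X] [Module ℝ X]

theorem convexOn_sInf_image_sublevel {f g : X → ℝ} (hf : ConvexOn ℝ univ f)
    (hg : ConvexOn ℝ univ g) (hf₀ : ∀ x, 0 ≤ f x) {s : Set ℝ} (hs : Convex ℝ s)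
    (hfeas : ∀ c ∈ s, ∃ x, g x ≤ c) :
    ConvexOn ℝ s fun c => sInf (f '' {x | g x ≤ c}) := by
  have hbdd : ∀ c, BddBelow (f '' {x | g x ≤ c}) :=
    fun c => ⟨0, by rintro _ ⟨x, -, rfl⟩; exact hf₀ x⟩
  have happrox : ∀ c ∈ s, ∀ ε > 0, ∃ x, g x ≤ c ∧ f x < sInf (f '' {x | g x ≤ c}) + ε := by
    intro c hc ε hε
    obtain ⟨x₀, hx₀⟩ := hfeas c hc
    obtain ⟨_, ⟨x, hx, rfl⟩, hlt⟩ := exists_lt_of_csInf_lt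
      (Nonempty.image f (s := {x | g x ≤ c}) ⟨x₀, hx₀⟩) (lt_add_of_pos_right _ hε)
    exact ⟨x, hx, hlt⟩
  refine ⟨hs, fun c₁ hc₁ c₂ hc₂ θ₁ θ₂ hθ₁ hθ₂ hθ => le_of_forall_pos_le_add fun ε hε => ?_⟩
  obtain ⟨x₁, hgx₁, hfx₁⟩ := happrox c₁ hc₁ ε hε
  obtain ⟨x₂, hgx₂, hfx₂⟩ := happrox c₂ hc₂ ε hε
  have hg_comb : g (θ₁ • x₁ + θ₂ • x₂) ≤ θ₁ • c₁ + θ₂ • c₂ :=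
    (hg.2 trivial trivial hθ₁ hθ₂ hθ).trans (by simp only [smul_eq_mul]; gcongr)
  calc sInf (f '' {x | g x ≤ θ₁ • c₁ + θ₂ • c₂}) ≤ f (θ₁ • x₁ + θ₂ • x₂) :=
        csInf_le (hbdd _) ⟨_, hg_comb, rfl⟩
    _ ≤ θ₁ • f x₁ + θ₂ • f x₂ := hf.2 trivial trivial hθ₁ hθ₂ hθ
    _ ≤ θ₁ • (sInf (f '' {x | g x ≤ c₁}) + ε) + θ₂ • (sInf (f '' {x | g x ≤ c₂}) + ε) := by
        simp only [smul_eq_mul]; gcongr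
    _ = _ := by simp only [smul_eq_mul]; linear_combination ε * hθ

end ValueFunction

section OptimalNorm

variable {X E : Type*} [AddCommGroup X] [Module ℝ X] [NormedAddCommGroup E] [NormedSpace ℝ E]
  (p : Seminorm ℝ X) (J : X →ₗ[ℝ] E) (a : E)

def minDist (M : ℝ) : ℝ := sInf ((fun x => ‖J x - a‖) '' {x | p x ≤ M})

def minNorm (r : ℝ) : ℝ := sInf (p '' {x | ‖J x - a‖ ≤ r})

def SurjectiveWithCost (C : ℝ) : Prop := ∀ z, ∃ x, J x = z ∧ p x ≤ C * ‖z‖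

variable {p J a}

theorem minDist_nonneg (M : ℝ) : 0 ≤ minDist p J a M :=
  Real.sInf_nonneg (by rintro _ ⟨x, -, rfl⟩; exact norm_nonneg _)

theorem minNorm_nonneg (r : ℝ) : 0 ≤ minNorm p J a r :=
  Real.sInf_nonneg (by rintro _ ⟨x, -, rfl⟩; exact apply_nonneg p x)

theorem minDist_le {M : ℝ} {x : X} (hx : p x ≤ M) : minDist p J a M ≤ ‖J x - a‖ :=
  csInf_le ⟨0, by rintro _ ⟨y, -, rfl⟩; exact norm_nonneg _⟩ ⟨x, hx, rfl⟩

theorem minNorm_le {r : ℝ} {x : X} (hx : ‖J x - a‖ ≤ r) : minNorm p J a r ≤ p x :=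
  csInf_le ⟨0, by rintro _ ⟨y, -, rfl⟩; exact apply_nonneg p y⟩ ⟨x, hx, rfl⟩

theorem minDist_le_norm {M : ℝ} (hM : 0 ≤ M) : minDist p J a M ≤ ‖a‖ := by
  simpa using minDist_le (J := J) (a := a) (x := 0) (by simpa using hM)

theorem exists_lt_of_minDist_lt {M s : ℝ} (hM : 0 ≤ M) (h : minDist p J a M < s) :
    ∃ x, p x ≤ M ∧ ‖J x - a‖ < s := by
  obtain ⟨_, ⟨x, hx, rfl⟩, hlt⟩ :=
    exists_lt_of_csInf_lt (Nonempty.image _ ⟨0, by simpa using hM⟩) h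
  exact ⟨x, hx, hlt⟩

theorem exists_lt_of_minNorm_lt {r s : ℝ} (hr : ∃ x, ‖J x - a‖ ≤ r) (h : minNorm p J a r < s) :
    ∃ x, ‖J x - a‖ ≤ r ∧ p x < s := by
  obtain ⟨x₀, hx₀⟩ := hr
  obtain ⟨_, ⟨x, hx, rfl⟩, hlt⟩ := exists_lt_of_csInf_lt (Nonempty.image p ⟨x₀, hx₀⟩) h
  exact ⟨x, hx, hlt⟩

theorem convexOn_norm_sub (J : X →ₗ[ℝ] E) (a : E) : ConvexOn ℝ univ fun x => ‖J x - a‖ := by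
  have h := (convexOn_univ_dist a).comp_linearMap J
  rw [preimage_univ] at h
  convert h using 1
  funext x
  exact (dist_eq_norm _ _).symm

theorem convexOn_minDist : ConvexOn ℝ (Ici 0) (minDist p J a) :=
  convexOn_sInf_image_sublevel (convexOn_norm_sub J a) p.convexOn (fun _ => norm_nonneg _)
    (convex_Ici 0) fun _ hc => ⟨0, by simpa using hc⟩

theorem SurjectiveWithCost.exists_apply_eq {C : ℝ} (hJ : SurjectiveWithCost p J C) (z : E) :
    ∃ x, J x = z := (hJ z).imp fun _ hx => hx.1

theorem convexOn_minNorm (ha : ∃ x, J x = a) : ConvexOn ℝ (Ici 0) (minNorm p J a) :=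
  convexOn_sInf_image_sublevel p.convexOn (convexOn_norm_sub J a) (apply_nonneg p)
    (convex_Ici 0) fun c hc => ha.imp fun x hx => by simpa [hx] using hc

theorem minDist_le_minDist {M₁ M₂ : ℝ} (h₀ : 0 ≤ M₁) (h : M₁ ≤ M₂) :
    minDist p J a M₂ ≤ minDist p J a M₁ :=
  csInf_le_csInf ⟨0, by rintro _ ⟨y, -, rfl⟩; exact norm_nonneg _⟩
    (Nonempty.image _ ⟨0, by simpa using h₀⟩) (image_mono fun _ hx => le_trans hx h)

theorem minNorm_eq_zero {r : ℝ} (hr : ‖a‖ ≤ r) : minNorm p J a r = 0 :=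
  le_antisymm (by simpa using minNorm_le (p := p) (J := J) (x := 0) (by simpa using hr))
    (minNorm_nonneg r)

theorem sub_le_mul_minNorm {K r : ℝ} (hK₀ : 0 ≤ K) (hK : ∀ x, ‖J x‖ ≤ K * p x)
    (hr : ∃ x, ‖J x - a‖ ≤ r) : ‖a‖ - r ≤ K * minNorm p J a r := by
  obtain ⟨x₀, hx₀⟩ := hr
  rw [minNorm, ← smul_eq_mul, ← Real.sInf_smul_of_nonneg hK₀]
  refine le_csInf ((Nonempty.image p (s := {x | ‖J x - a‖ ≤ r}) ⟨x₀, hx₀⟩).smul_set) ?_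
  rintro _ ⟨_, ⟨x, hx, rfl⟩, rfl⟩
  have hdist : ‖a‖ ≤ ‖J x‖ + ‖J x - a‖ := by
    simpa using norm_sub_le (J x) (J x - a)
  calc ‖a‖ - r ≤ ‖J x‖ := by linarith [show ‖J x - a‖ ≤ r from hx]
    _ ≤ K • p x := hK x

theorem minNorm_pos {K r : ℝ} (hK₀ : 0 ≤ K) (hK : ∀ x, ‖J x‖ ≤ K * p x)
    (hr : ∃ x, ‖J x - a‖ ≤ r) (hra : r < ‖a‖) : 0 < minNorm p J a r :=
  pos_of_mul_pos_right ((sub_pos.2 hra).trans_le (sub_le_mul_minNorm hK₀ hK hr)) hK₀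

theorem exists_norm_sub_le_of_exists_apply_eq (ha : ∃ x, J x = a) {r : ℝ} (hr : 0 ≤ r) :
    ∃ x, ‖J x - a‖ ≤ r :=
  ha.imp fun x hx => by simpa [hx] using hr

theorem minNorm_lt_minNorm {K r s : ℝ} (hK₀ : 0 ≤ K) (hK : ∀ x, ‖J x‖ ≤ K * p x)
    (ha : ∃ x, J x = a) (hs : 0 ≤ s) (hsr : s < r) (hra : r ≤ ‖a‖) :
    minNorm p J a r < minNorm p J a s := by
  have hs_pos :=
    minNorm_pos hK₀ hK (exists_norm_sub_le_of_exists_apply_eq ha hs) (hsr.trans_le hra)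
  rcases hra.lt_or_eq with hra | rfl
  · refine (convexOn_minNorm ha).lt_left_of_right_lt (x := s) (y := ‖a‖) hs (norm_nonneg a)
      (by rw [openSegment_eq_Ioo (hsr.trans hra)]; exact ⟨hsr, hra⟩) ?_
    rw [minNorm_eq_zero le_rfl]
    exact minNorm_pos hK₀ hK (exists_norm_sub_le_of_exists_apply_eq ha (hs.trans hsr.le)) hra
  · rwa [minNorm_eq_zero le_rfl]

theorem SurjectiveWithCost.exists_closer {C t : ℝ} (hJ : SurjectiveWithCost p J C) (hC : 0 ≤ C)
    (x : X) (ht₀ : 0 ≤ t) (ht : t ≤ ‖J x - a‖) :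
    ∃ y, p y ≤ p x + C * t ∧ ‖J y - a‖ ≤ ‖J x - a‖ - t := by
  set d := ‖J x - a‖ with hd
  rcases (norm_nonneg (J x - a)).eq_or_lt with hd₀ | hd₀
  · exact ⟨x, by nlinarith, by linarith⟩
  rw [← hd] at hd₀
  obtain ⟨v, hv, hpv⟩ := hJ ((t / d) • (a - J x))
  have hz : ‖(t / d) • (a - J x)‖ = t := by
    rw [norm_smul, Real.norm_eq_abs, abs_of_nonneg (by positivity), norm_sub_rev, ← hd]
    field_simp
  have hy : J (x + v) - a = (1 - t / d) • (J x - a) := by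
    rw [map_add, hv]
    module
  refine ⟨x + v, (map_add_le_add p x v).trans (by rw [hz] at hpv; linarith), le_of_eq ?_⟩
  rw [hy, norm_smul, Real.norm_eq_abs,
    abs_of_nonneg (sub_nonneg.2 (div_le_one_of_le₀ ht hd₀.le)), ← hd]
  field_simp

theorem minDist_add_mul_le {C M t : ℝ} (hJ : SurjectiveWithCost p J C) (hC : 0 ≤ C)
    (hM : 0 ≤ M) (ht₀ : 0 ≤ t) (ht : t ≤ minDist p J a M) :
    minDist p J a (M + C * t) ≤ minDist p J a M - t := by
  refine le_of_forall_pos_le_add fun ε hε => ?_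
  obtain ⟨x, hxM, hx⟩ := exists_lt_of_minDist_lt hM (lt_add_of_pos_right (minDist p J a M) hε)
  obtain ⟨y, hyp, hy⟩ := hJ.exists_closer hC x ht₀ (ht.trans (minDist_le hxM))
  calc minDist p J a (M + C * t) ≤ ‖J y - a‖ := minDist_le (by linarith)
    _ ≤ minDist p J a M - t + ε := by linarith

theorem minNorm_minDist_le {C M : ℝ} (hJ : SurjectiveWithCost p J C) (hC : 0 < C)
    (hM : 0 ≤ M) : minNorm p J a (minDist p J a M) ≤ M := by
  refine le_of_forall_pos_le_add fun ε hε => ?_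
  obtain ⟨x, hxM, hx⟩ := exists_lt_of_minDist_lt hM
    (lt_add_of_pos_right (minDist p J a M) (div_pos hε hC))
  set t := ‖J x - a‖ - minDist p J a M
  obtain ⟨y, hyp, hy⟩ := hJ.exists_closer hC.le x (sub_nonneg.2 (minDist_le hxM))
    (sub_le_self _ (minDist_nonneg M))
  have hCt : C * t ≤ ε := by rw [← le_div_iff₀' hC]; linarith
  calc minNorm p J a (minDist p J a M) ≤ p y := minNorm_le (by linarith)
    _ ≤ M + ε := by linarith

theorem minNorm_lt_minNorm_zero {K r : ℝ} (hK₀ : 0 ≤ K) (hK : ∀ x, ‖J x‖ ≤ K * p x)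
    (ha : ∃ x, J x = a) (ha₀ : 0 < ‖a‖) (hr : 0 < r) : minNorm p J a r < minNorm p J a 0 := by
  rcases le_or_gt r ‖a‖ with hra | hra
  · exact minNorm_lt_minNorm hK₀ hK ha le_rfl hr hra
  · rw [minNorm_eq_zero hra.le]
    exact minNorm_pos hK₀ hK (exists_norm_sub_le_of_exists_apply_eq ha le_rfl) ha₀

theorem minDist_minNorm {K r : ℝ} (hK₀ : 0 ≤ K) (hK : ∀ x, ‖J x‖ ≤ K * p x)
    (ha : ∃ x, J x = a) (hr : r ∈ Ioc 0 ‖a‖) : minDist p J a (minNorm p J a r) = r := by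
  obtain ⟨hr₀, hra⟩ := hr
  have hfeas := exists_norm_sub_le_of_exists_apply_eq ha hr₀.le
  refine le_antisymm ?_ (not_lt.1 fun hlt => ?_)
  · rcases hra.lt_or_eq with hra | rfl
    · have hcont : ContinuousAt (minDist p J a) (minNorm p J a r) := by
        have h := convexOn_minDist (p := p) (J := J) (a := a) |>.continuousOn_interior
        rw [interior_Ici] at h
        exact h.continuousAt (Ioi_mem_nhds (minNorm_pos hK₀ hK hfeas hra))
      refine le_of_tendsto (hcont.tendsto.mono_left nhdsWithin_le_nhds)
        (eventually_nhdsWithin_of_forall (s := Ioi (minNorm p J a r)) fun M hM => ?_)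
      obtain ⟨x, hx, hpx⟩ := exists_lt_of_minNorm_lt hfeas hM
      exact (minDist_le hpx.le).trans hx
    · exact minDist_le_norm (minNorm_nonneg _)
  · obtain ⟨s, hs, hsr⟩ := exists_between hlt
    obtain ⟨x, hpx, hx⟩ := exists_lt_of_minDist_lt (minNorm_nonneg r) hs
    have := minNorm_lt_minNorm hK₀ hK ha ((minDist_nonneg _).trans hs.le) hsr hra
    linarith [minNorm_le (p := p) hx.le]

theorem minNorm_minDist {C K M : ℝ} (hK₀ : 0 ≤ K) (hK : ∀ x, ‖J x‖ ≤ K * p x)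
    (hJ : SurjectiveWithCost p J C) (hC : 0 < C) (hM : M ∈ Ico 0 (minNorm p J a 0)) :
    minNorm p J a (minDist p J a M) = M := by
  obtain ⟨hM₀, hMlt⟩ := hM
  have hle := minNorm_minDist_le (a := a) hJ hC hM₀
  have hρ : 0 < minDist p J a M :=
    (minDist_nonneg M).lt_of_ne fun h0 => hMlt.not_ge (by rwa [← h0] at hle)
  refine le_antisymm hle (not_lt.1 fun hlt => ?_)
  set M' := minNorm p J a (minDist p J a M)
  have hDM' : minDist p J a M' = minDist p J a M :=
    minDist_minNorm hK₀ hK (hJ.exists_apply_eq a) ⟨hρ, minDist_le_norm hM₀⟩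
  set t := min (minDist p J a M) ((M - M') / C)
  have ht₀ : 0 < t := lt_min hρ (div_pos (sub_pos.2 hlt) hC)
  have hCt : C * t ≤ M - M' := by
    rw [← le_div_iff₀' hC]; exact min_le_right _ _
  have hdrop := minDist_add_mul_le hJ hC.le (minNorm_nonneg _) ht₀.le
    (by rw [hDM']; exact min_le_left _ _)
  have hmono := minDist_le_minDist (p := p) (J := J) (a := a)
    (add_nonneg (minNorm_nonneg _) (mul_nonneg hC.le ht₀.le)) (show M' + C * t ≤ M by linarith)
  linarith

end OptimalNorm

section Linfty

variable {E : Type*} [NormedAddCommGroup E] {u v : ℝ → E} {a b c : ℝ}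

theorem supNorm_nonneg (u : ℝ → E) (a b : ℝ) : 0 ≤ supNorm u a b :=
  Real.sInf_nonneg fun _ hc => hc.1

theorem supNorm_le (hc : 0 ≤ c) (h : ∀ᵐ t, t ∈ Ioo a b → ‖u t‖ ≤ c) : supNorm u a b ≤ c :=
  csInf_le ⟨0, fun _ hx => hx.1⟩ ⟨hc, h⟩

theorem MemLinfty.ae_norm_le_supNorm (hu : MemLinfty u a b) :
    ∀ᵐ t, t ∈ Ioo a b → ‖u t‖ ≤ supNorm u a b := by
  obtain ⟨-, c, hc⟩ := hu
  have hne : {c | 0 ≤ c ∧ ∀ᵐ t, t ∈ Ioo a b → ‖u t‖ ≤ c}.Nonempty :=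
    ⟨max c 0, le_max_right _ _, by
      filter_upwards [hc] with t ht hts using (ht hts).trans (le_max_left _ _)⟩
  obtain ⟨c, -, hc_lim, hc_mem⟩ := exists_seq_tendsto_sInf hne ⟨0, fun _ hx => hx.1⟩
  filter_upwards [ae_all_iff.2 fun n => (hc_mem n).2] with t ht hts
  exact ge_of_tendsto' hc_lim fun n => ht n hts

theorem MemLinfty.supNorm_le_iff (hu : MemLinfty u a b) (hc : 0 ≤ c) :
    supNorm u a b ≤ c ↔ ∀ᵐ t, t ∈ Ioo a b → ‖u t‖ ≤ c :=
  ⟨fun h => by filter_upwards [hu.ae_norm_le_supNorm] with t ht hts using (ht hts).trans h,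
    supNorm_le hc⟩

theorem MemLinfty.mono {a' b' : ℝ} (hu : MemLinfty u a b) (h : Ioo a' b' ⊆ Ioo a b) :
    MemLinfty u a' b' := by
  obtain ⟨hm, c, hc⟩ := hu
  exact ⟨hm, c, by filter_upwards [hc] with t ht hts using ht (h hts)⟩

theorem MemLinfty.add (hu : MemLinfty u a b) (hv : MemLinfty v a b) : MemLinfty (u + v) a b := by
  obtain ⟨hum, cu, hcu⟩ := hu
  obtain ⟨hvm, cv, hcv⟩ := hv
  refine ⟨hum.add hvm, cu + cv, ?_⟩
  filter_upwards [hcu, hcv] with t hut hvt hts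
  exact (norm_add_le _ _).trans (add_le_add (hut hts) (hvt hts))

theorem supNorm_add_le (hu : MemLinfty u a b) (hv : MemLinfty v a b) :
    supNorm (u + v) a b ≤ supNorm u a b + supNorm v a b := by
  refine supNorm_le (add_nonneg (supNorm_nonneg u a b) (supNorm_nonneg v a b)) ?_
  filter_upwards [hu.ae_norm_le_supNorm, hv.ae_norm_le_supNorm] with t hut hvt hts
  exact (norm_add_le _ _).trans (add_le_add (hut hts) (hvt hts))

theorem supNorm_zero (a b : ℝ) : supNorm (0 : ℝ → E) a b = 0 :=
  le_antisymm (supNorm_le le_rfl (by simp)) (supNorm_nonneg _ a b)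

variable [NormedSpace ℝ E]

theorem MemLinfty.const_smul (hu : MemLinfty u a b) (r : ℝ) : MemLinfty (r • u) a b := by
  obtain ⟨hm, c, hc⟩ := hu
  refine ⟨hm.const_smul r, ‖r‖ * c, ?_⟩
  filter_upwards [hc] with t ht hts
  rw [Pi.smul_apply, norm_smul]
  exact mul_le_mul_of_nonneg_left (ht hts) (norm_nonneg r)

theorem supNorm_smul_le (hu : MemLinfty u a b) (r : ℝ) :
    supNorm (r • u) a b ≤ ‖r‖ * supNorm u a b := by
  refine supNorm_le (mul_nonneg (norm_nonneg r) (supNorm_nonneg u a b)) ?_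
  filter_upwards [hu.ae_norm_le_supNorm] with t ht hts
  rw [Pi.smul_apply, norm_smul]
  exact mul_le_mul_of_nonneg_left (ht hts) (norm_nonneg r)

variable (E) in
def LinftyOn (a b : ℝ) : Submodule ℝ (ℝ → E) where
  carrier := {u | MemLinfty u a b}
  add_mem' hu hv := hu.add hv
  zero_mem' := ⟨aestronglyMeasurable_const, 0, by simp⟩
  smul_mem' r _ hu := hu.const_smul r

theorem LinftyOn.mono {a' b' : ℝ} (h : Ioo a' b' ⊆ Ioo a b) : LinftyOn E a b ≤ LinftyOn E a' b' :=
  fun _ hu => MemLinfty.mono hu h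

theorem image_memLinfty_and (f : (ℝ → E) → ℝ) (Q : (ℝ → E) → Prop) :
    f '' {u | MemLinfty u a b ∧ Q u} = (fun x : LinftyOn E a b => f x) '' {x | Q x} := by
  ext r
  constructor
  · rintro ⟨u, ⟨hu, hQ⟩, rfl⟩
    exact ⟨⟨u, hu⟩, hQ, rfl⟩
  · rintro ⟨x, hQ, rfl⟩
    exact ⟨x, ⟨x.2, hQ⟩, rfl⟩

variable (E) in
def supNormSeminorm (a b : ℝ) : Seminorm ℝ (LinftyOn E a b) :=
  Seminorm.ofSMulLE (fun u => supNorm (u : ℝ → E) a b) (supNorm_zero a b)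
    (fun u v => supNorm_add_le u.2 v.2) (fun r u => supNorm_smul_le u.2 r)

end Linfty

section InputMap

variable {E : Type*} [NormedAddCommGroup E] [InnerProductSpace ℂ E] {U : ℝ → E →L[ℂ] E}
  {u : ℝ → E} {τ T : ℝ}

theorem IsUnitaryGroup.continuous_uncurry (hU : IsUnitaryGroup U) :
    Continuous fun q : ℝ × E => U q.1 q.2 :=
  continuous_prod_of_continuous_lipschitzWith' _ 1
    (fun t => LipschitzWith.of_dist_le_mul fun x y => by
      rw [dist_eq_norm, dist_eq_norm, ← map_sub, hU.2.2.1, NNReal.coe_one, one_mul])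
    hU.2.2.2

theorem IsUnitaryGroup.ae_norm_duhamel_le (hU : IsUnitaryGroup U) (B : E →L[ℂ] E)
    (hu : MemLinfty u τ T) :
    ∀ᵐ s, s ∈ Ioo τ T → ‖U (T - s) (B (u s))‖ ≤ ‖B‖ * supNorm u τ T := by
  filter_upwards [hu.ae_norm_le_supNorm] with s hs hsτ
  rw [hU.2.2.1]
  exact (B.le_opNorm _).trans (mul_le_mul_of_nonneg_left (hs hsτ) (norm_nonneg B))

theorem IsUnitaryGroup.integrableOn_duhamel (hU : IsUnitaryGroup U) (B : E →L[ℂ] E)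
    (hu : MemLinfty u τ T) : IntegrableOn (fun s => U (T - s) (B (u s))) (Ioo τ T) := by
  refine Measure.integrableOn_of_bounded (M := ‖B‖ * supNorm u τ T) (by simp)
    (hU.continuous_uncurry.comp_aestronglyMeasurable
      ((continuous_const.sub continuous_id).aestronglyMeasurable.prodMk
        (B.continuous.comp_aestronglyMeasurable hu.1))) ?_
  rw [ae_restrict_iff' measurableSet_Ioo]
  exact hU.ae_norm_duhamel_le B hu

def inputMap (hU : IsUnitaryGroup U) (B : E →L[ℂ] E) (τ T : ℝ) : LinftyOn E τ T →ₗ[ℝ] E where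
  toFun u := ∫ s in Ioo τ T, U (T - s) (B ((u : ℝ → E) s))
  map_add' u v := by
    simp only [Submodule.coe_add, Pi.add_apply, map_add]
    exact integral_add (hU.integrableOn_duhamel B u.2) (hU.integrableOn_duhamel B v.2)
  map_smul' r u := by
    simp only [Submodule.coe_smul, Pi.smul_apply, ContinuousLinearMap.map_smul_of_tower,
      RingHom.id_apply]
    exact integral_smul r _

theorem IsUnitaryGroup.norm_inputMap_le (hU : IsUnitaryGroup U) (B : E →L[ℂ] E) (hτT : τ ≤ T)
    (u : LinftyOn E τ T) :
    ‖inputMap hU B τ T u‖ ≤ ‖B‖ * (T - τ) * supNormSeminorm E τ T u := by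
  have h := norm_setIntegral_le_of_norm_le_const_ae' (by simp) (hU.ae_norm_duhamel_le B u.2)
  rwa [Real.volume_real_Ioo_of_le hτT, mul_right_comm] at h

end InputMap

section Steering

variable {E : Type*} [NormedAddCommGroup E] [InnerProductSpace ℂ E] {U : ℝ → E →L[ℂ] E}
  {B : E →L[ℂ] E} {τ T : ℝ}

theorem EC.exists_control (hEC : EC U B) (hτT : τ < T) :
    ∃ C, 0 < C ∧ ∀ z : E, ∃ v : ℝ → E, AEStronglyMeasurable v ∧
      (∀ᵐ t, ‖v t‖ ≤ C * ‖z‖) ∧ ∫ s in Ioo τ T, U (T - s) (B (v s)) = z := by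
  obtain ⟨C, hC, hctrl⟩ := hEC (T - τ) (sub_pos.2 hτT)
  refine ⟨C, hC, fun z => ?_⟩
  obtain ⟨v₀, hv₀m, hv₀b, hv₀⟩ := hctrl 0 z
  simp only [stateT, map_zero, zero_add, sub_zero] at hv₀ hv₀b
  have hshift := measurePreserving_sub_right (volume : Measure ℝ) τ
  refine ⟨(Ioo τ T).indicator fun t => v₀ (t - τ),
    (hv₀m.comp_quasiMeasurePreserving hshift.quasiMeasurePreserving).indicator measurableSet_Ioo,
    ?_, ?_⟩
  · filter_upwards [hshift.quasiMeasurePreserving.ae hv₀b] with t ht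
    by_cases hmem : t ∈ Ioo τ T
    · rw [indicator_of_mem hmem]
      exact ht ⟨sub_pos.2 hmem.1, sub_lt_sub_right hmem.2 τ⟩
    · rw [indicator_of_notMem hmem, norm_zero]
      positivity
  · have hpre : (fun t => t - τ) ⁻¹' Ioo 0 (T - τ) = Ioo τ T := by
      ext t; simp
    have hcov := hshift.setIntegral_preimage_emb (measurableEmbedding_subRight τ)
      (fun σ => U (T - τ - σ) (B (v₀ σ))) (Ioo 0 (T - τ))
    rw [hpre] at hcov
    rw [← hv₀, ← hcov]
    refine setIntegral_congr_fun measurableSet_Ioo fun s hs => ?_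
    simp only [indicator_of_mem hs, sub_sub_sub_cancel_right]

theorem EC.surjectiveWithCost (hU : IsUnitaryGroup U) (hEC : EC U B) (hτT : τ < T) {a : ℝ}
    (h : LinftyOn E a T ≤ LinftyOn E τ T) :
    ∃ C, 0 < C ∧ SurjectiveWithCost ((supNormSeminorm E τ T).comp (Submodule.inclusion h))
      ((inputMap hU B τ T).comp (Submodule.inclusion h)) C := by
  obtain ⟨C, hC, hctrl⟩ := hEC.exists_control hτT
  refine ⟨C, hC, fun z => ?_⟩
  obtain ⟨v, hvm, hvb, hv⟩ := hctrl z
  exact ⟨⟨v, hvm, C * ‖z‖, hvb.mono fun t ht _ => ht⟩, hv,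
    supNorm_le (by positivity) (hvb.mono fun t ht _ => ht)⟩

end Steering

section OptimalControlProblems

variable {E : Type*} [NormedAddCommGroup E] [InnerProductSpace ℂ E] {U : ℝ → E →L[ℂ] E}
  (hU : IsUnitaryGroup U) (B : E →L[ℂ] E) {τ T : ℝ} (h : LinftyOn E 0 T ≤ LinftyOn E τ T)
  (y₀ z_d : E)

theorem stateT_sub_eq (x : LinftyOn E 0 T) :
    stateT U B T τ x y₀ - z_d =
      (inputMap hU B τ T).comp (Submodule.inclusion h) x - (z_d - U T y₀) := by
  have hx : (inputMap hU B τ T).comp (Submodule.inclusion h) x =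
      ∫ s in Ioo τ T, U (T - s) (B ((x : ℝ → E) s)) := rfl
  rw [hx, stateT]
  abel

theorem rOP_eq_minDist {M : ℝ} (hM : 0 ≤ M) :
    rOP U B y₀ z_d T M τ = minDist ((supNormSeminorm E τ T).comp (Submodule.inclusion h))
      ((inputMap hU B τ T).comp (Submodule.inclusion h)) (z_d - U T y₀) M := by
  rw [rOP, UadmSet, image_memLinfty_and, minDist]
  congr 1
  ext r
  simp only [mem_image, mem_ofPred_eq, stateT_sub_eq hU B h,
    ← (h (Subtype.prop _)).supNorm_le_iff hM]
  rfl

theorem MNP_eq_minNorm (r : ℝ) :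
    MNP U B y₀ z_d T τ r = minNorm ((supNormSeminorm E τ T).comp (Submodule.inclusion h))
      ((inputMap hU B τ T).comp (Submodule.inclusion h)) (z_d - U T y₀) r := by
  rw [MNP, WadmSet, image_memLinfty_and, minNorm]
  simp only [stateT_sub_eq hU B h]
  rfl

theorem Mtau_eq_minNorm_zero :
    Mtau U B y₀ z_d T τ = minNorm ((supNormSeminorm E τ T).comp (Submodule.inclusion h))
      ((inputMap hU B τ T).comp (Submodule.inclusion h)) (z_d - U T y₀) 0 := by
  rw [Mtau, image_memLinfty_and, minNorm]
  simp only [norm_le_zero_iff, ← stateT_sub_eq hU B h, sub_eq_zero]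
  rfl

end OptimalControlProblems

theorem rop_mnp_inverse_general
    (U : ℝ → H →L[ℂ] H) (B : H →L[ℂ] H) (hU : IsUnitaryGroup U)
    (hEC : EC U B)
    (T : ℝ) (y₀ z_d : H) (hrT : 0 < ‖U T y₀ - z_d‖)
    (τ : ℝ) (hτ : τ ∈ Ico (0 : ℝ) T) :
    (∀ r : ℝ, 0 < r → MNP U B y₀ z_d T τ r < Mtau U B y₀ z_d T τ) ∧
    (∀ r ∈ Ioc (0 : ℝ) ‖U T y₀ - z_d‖, rOP U B y₀ z_d T (MNP U B y₀ z_d T τ r) τ = r) ∧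
    (∀ M ∈ Ico (0 : ℝ) (Mtau U B y₀ z_d T τ), MNP U B y₀ z_d T τ (rOP U B y₀ z_d T M τ) = M) ∧
    InvOn (fun r => MNP U B y₀ z_d T τ r) (fun M => rOP U B y₀ z_d T M τ)
      (Ico (0 : ℝ) (Mtau U B y₀ z_d T τ)) (Ioc (0 : ℝ) ‖U T y₀ - z_d‖) := by
  obtain ⟨hτ₀, hτT⟩ := hτ
  have h : LinftyOn H 0 T ≤ LinftyOn H τ T := LinftyOn.mono (Ioo_subset_Ioo_left hτ₀)
  set p := (supNormSeminorm H τ T).comp (Submodule.inclusion h)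
  set J := (inputMap hU B τ T).comp (Submodule.inclusion h)
  set a := z_d - U T y₀
  obtain ⟨C, hC, hJ⟩ := hEC.surjectiveWithCost hU hτT h
  have hK : ∀ x, ‖J x‖ ≤ ‖B‖ * (T - τ) * p x := fun x => hU.norm_inputMap_le B hτT.le _
  have hK₀ : 0 ≤ ‖B‖ * (T - τ) := mul_nonneg (norm_nonneg B) (sub_nonneg.2 hτT.le)
  have ha : ‖U T y₀ - z_d‖ = ‖a‖ := norm_sub_rev _ _
  rw [Mtau_eq_minNorm_zero hU B h, ha]
  have hdist : ∀ r ∈ Ioc 0 ‖a‖, rOP U B y₀ z_d T (MNP U B y₀ z_d T τ r) τ = r := fun r hr => by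
    rw [MNP_eq_minNorm hU B h, rOP_eq_minDist hU B h _ _ (minNorm_nonneg r)]
    exact minDist_minNorm hK₀ hK (hJ.exists_apply_eq a) hr
  have hnorm : ∀ M ∈ Ico 0 (minNorm p J a 0), MNP U B y₀ z_d T τ (rOP U B y₀ z_d T M τ) = M :=
    fun M hM => by
      rw [rOP_eq_minDist hU B h _ _ hM.1, MNP_eq_minNorm hU B h]
      exact minNorm_minDist hK₀ hK hJ hC hM
  refine ⟨fun r hr => ?_, hdist, hnorm, hnorm, hdist⟩
  rw [MNP_eq_minNorm hU B h]
  exact minNorm_lt_minNorm_zero hK₀ hK (hJ.exists_apply_eq a) (ha ▸ hrT) hr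

theorem rop_mnp_inverse
    (U : ℝ → H →L[ℂ] H) (B : H →L[ℂ] H) (hU : IsUnitaryGroup U) (hB : IsOrthProj B)
    (hEC : EC U B) (hECrev : EC (fun t => U (-t)) B)
    (hUC : UC U B)
    (T : ℝ) (hT : 0 < T) (y₀ z_d : H) (hrT : 0 < ‖U T y₀ - z_d‖)
    (τ : ℝ) (hτ : τ ∈ Ico (0 : ℝ) T) :
    (∀ r : ℝ, 0 < r → MNP U B y₀ z_d T τ r < Mtau U B y₀ z_d T τ) ∧
    (∀ r ∈ Ioc (0 : ℝ) ‖U T y₀ - z_d‖, rOP U B y₀ z_d T (MNP U B y₀ z_d T τ r) τ = r) ∧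
    (∀ M ∈ Ico (0 : ℝ) (Mtau U B y₀ z_d T τ), MNP U B y₀ z_d T τ (rOP U B y₀ z_d T M τ) = M) ∧
    InvOn (fun r => MNP U B y₀ z_d T τ r) (fun M => rOP U B y₀ z_d T M τ)
      (Ico (0 : ℝ) (Mtau U B y₀ z_d T τ)) (Ioc (0 : ℝ) ‖U T y₀ - z_d‖) :=
  rop_mnp_inverse_general U B hU hEC T y₀ z_d hrT τ hτ
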